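/- arXiv:1703.00557 — 3 statements merged into one kernel-verified Lean document; each statement's English description precedes it below -/
import Mathlib

section
/- Let F : P(V) → ℝ≥0 be submodular and satisfy F(∅) = 0, and suppose F(S) = Σ_{v∈V} F(S,v) where each F(·,v) is monotone. Define p*(u,v) = F({u},v) and f(S,p*) = Σ_{v∈V} max_{u∈S} p*(u,v). Then for any S ⊆ V with |S| = K ≥ 1, F(S) ≤ K · f(S,p*). -/
theorem stmt3 {V : Type*} [Fintype V] [DecidableEq V]
    (F : Finset V → ℝ) (Fv : Finset V → V → ℝ)
    (hsubmod : ∀ A B : Finset V, F (A ∪ B) + F (A ∩ B) ≤ F A + F B)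
    (hempty : F ∅ = 0)
    (hdecomp : ∀ S : Finset V, F S = ∑ v : V, Fv S v)
    (hrange : ∀ S v, Fv S v ∈ Set.Icc (0:ℝ) 1)
    (hmono : ∀ S₁ S₂ : Finset V, ∀ v, S₁ ⊆ S₂ → Fv S₁ v ≤ Fv S₂ v)
    (S : Finset V) (hS : S.Nonempty) :
    F S ≤ (S.card : ℝ) * ∑ v : V, S.sup' hS (fun u => Fv {u} v) := by
  have hsub : ∀ A : Finset V, F A ≤ ∑ u ∈ A, F {u} := by
    intro A
    induction A using Finset.induction_on with
    | empty => simp [hempty]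
    | @insert x A' hx ih =>
      have h := hsubmod A' {x}
      have hinter : A' ∩ {x} = ∅ := by
        ext y; simp; rintro hy rfl; exact hx hy
      rw [hinter, hempty, Finset.union_comm, ← Finset.insert_eq] at h
      rw [Finset.sum_insert hx]
      linarith
  calc F S ≤ ∑ u ∈ S, F {u} := hsub S
    _ = ∑ u ∈ S, ∑ v : V, Fv {u} v := by simp [hdecomp]
    _ ≤ ∑ u ∈ S, ∑ v : V, S.sup' hS (fun u => Fv {u} v) := by
        refine Finset.sum_le_sum fun u hu => Finset.sum_le_sum fun v _ =>
          Finset.le_sup' (fun u => Fv {u} v) hu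
    _ = (S.card : ℝ) * ∑ v : V, S.sup' hS (fun u => Fv {u} v) := by
        rw [Finset.sum_const, nsmul_eq_mul]
end

section
/- Let F be monotone per-node and submodular as above, S* a maximizer of F over feasible sets C = {S : |S| ≤ K, S nonempty}, and S̃ a maximizer of f(·,p*) over C. Then the approximation factor ρ = f(S̃,p*)/F(S*) satisfies 1/K ≤ ρ ≤ 1. -/
theorem stmt4 {V : Type*} [Fintype V] [DecidableEq V]
    (F : Finset V → ℝ) (Fv : Finset V → V → ℝ) (K : ℕ) (hK : 1 ≤ K)
    (hsubmod : ∀ A B : Finset V, F (A ∪ B) + F (A ∩ B) ≤ F A + F B)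
    (hempty : F ∅ = 0)
    (hdecomp : ∀ S : Finset V, F S = ∑ v : V, Fv S v)
    (hrange : ∀ S v, Fv S v ∈ Set.Icc (0:ℝ) 1)
    (hmono : ∀ S₁ S₂ : Finset V, ∀ v, S₁ ⊆ S₂ → Fv S₁ v ≤ Fv S₂ v)
    (Sstar Stil : Finset V) (hSs : Sstar.Nonempty) (hSt : Stil.Nonempty)
    (hSsK : Sstar.card ≤ K) (hStK : Stil.card ≤ K)
    (hmaxF : ∀ S : Finset V, S.Nonempty → S.card ≤ K → F S ≤ F Sstar)
    (hmaxf : ∀ (S : Finset V) (hS : S.Nonempty), S.card ≤ K →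
      (∑ v : V, S.sup' hS (fun u => Fv {u} v)) ≤
        ∑ v : V, Stil.sup' hSt (fun u => Fv {u} v))
    (hpos : 0 < F Sstar) :
    1 / (K : ℝ) ≤ (∑ v : V, Stil.sup' hSt (fun u => Fv {u} v)) / F Sstar ∧
      (∑ v : V, Stil.sup' hSt (fun u => Fv {u} v)) / F Sstar ≤ 1 := by
  set f := ∑ v : V, Stil.sup' hSt (fun u => Fv {u} v) with hf
  have hFnn : ∀ S : Finset V, 0 ≤ F S := by
    intro S
    rw [hdecomp]
    exact Finset.sum_nonneg fun v _ => (hrange S v).1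
  -- subadditivity
  have hsub : ∀ S : Finset V, F S ≤ ∑ u ∈ S, F {u} := by
    intro S
    induction S using Finset.induction_on with
    | empty => simp [hempty]
    | @insert a s ha ih =>
      have h := hsubmod {a} s
      rw [Finset.sum_insert ha]
      have : F (insert a s) ≤ F {a} + F s := by
        have h1 : ({a} : Finset V) ∪ s = insert a s := by
          ext x; simp [or_comm]
        rw [h1] at h
        nlinarith [hFnn (({a} : Finset V) ∩ s)]
      linarith
  -- F {u} ≤ f for u ∈ Sstar
  have hsingle : ∀ u ∈ Sstar, F {u} ≤ f := by
    intro u hu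
    have h1 : F {u} ≤ ∑ v : V, Sstar.sup' hSs (fun u => Fv {u} v) := by
      rw [hdecomp]
      exact Finset.sum_le_sum fun v _ =>
        Finset.le_sup' (fun u => Fv {u} v) hu
    exact h1.trans (hmaxf Sstar hSs hSsK)
  have hfnn : 0 ≤ f := by
    obtain ⟨u, hu⟩ := hSs
    have := hFnn {u}
    linarith [hsingle u hu]
  have hKf : F Sstar ≤ (K : ℝ) * f := by
    calc F Sstar ≤ ∑ u ∈ Sstar, F {u} := hsub Sstar
    _ ≤ ∑ _u ∈ Sstar, f := Finset.sum_le_sum fun u hu => hsingle u hu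
    _ = (Sstar.card : ℝ) * f := by rw [Finset.sum_const, nsmul_eq_mul]
    _ ≤ (K : ℝ) * f := by
        apply mul_le_mul_of_nonneg_right _ hfnn
        exact_mod_cast hSsK
  have hKpos : (0 : ℝ) < K := by exact_mod_cast hK
  constructor
  · rw [div_le_div_iff₀ hKpos hpos, one_mul]
    linarith
  · rw [div_le_one hpos]
    have h1 : f ≤ F Stil := by
      rw [hdecomp]
      apply Finset.sum_le_sum
      intro v _
      apply Finset.sup'_le
      intro u hu
      exact hmono {u} Stil v (Finset.singleton_subset_iff.mpr hu)
    exact h1.trans (hmaxF Stil hSt hStK)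
end

section
/- Let z₁,…,z_N ∈ ℝ≥0 with z_i² ≤ 1/λ for all i and Σ_{i=1}^N log(1 + z_i²/σ²) ≤ B. Then Σ_{i=1}^N z_i ≤ √N · √(B / (λ log(1 + 1/(λσ²)))). -/
theorem stmt12 {N : ℕ} (lam σ B : ℝ) (hlam : 0 < lam) (hσ : 0 < σ) (hB : 0 ≤ B)
    (z : Fin N → ℝ) (hz : ∀ i, 0 ≤ z i) (hz2 : ∀ i, (z i)^2 ≤ 1/lam)
    (hlog : ∑ i, Real.log (1 + (z i)^2/σ^2) ≤ B) :
    ∑ i, z i ≤ Real.sqrt N * Real.sqrt (B / (lam * Real.log (1 + 1/(lam * σ^2)))) := by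
  set L := Real.log (1 + 1/(lam * σ^2)) with hL
  have hσ2 : (0:ℝ) < σ^2 := by positivity
  have hLpos : 0 < L := Real.log_pos (by
    have : (0:ℝ) < 1/(lam*σ^2) := by positivity
    linarith)
  -- key pointwise bound: lam * L * z i ^2 ≤ log (1 + z i^2/σ^2)
  have key : ∀ i, lam * L * (z i)^2 ≤ Real.log (1 + (z i)^2/σ^2) := by
    intro i
    have hy0 : 0 ≤ (z i)^2 := sq_nonneg _
    set t := lam * (z i)^2 with ht
    have ht0 : 0 ≤ t := by positivity
    have ht1 : t ≤ 1 := by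
      have := hz2 i
      rw [ht]
      calc lam * (z i)^2 ≤ lam * (1/lam) := by
            exact mul_le_mul_of_nonneg_left this hlam.le
        _ = 1 := by field_simp
    have hconc := (strictConcaveOn_log_Ioi.concaveOn).2
      (Set.mem_Ioi.mpr one_pos)
      (Set.mem_Ioi.mpr (show (0:ℝ) < 1 + 1/(lam*σ^2) by positivity))
      (show (0:ℝ) ≤ 1 - t by linarith) ht0 (by ring)
    have heq : (1 - t) • (1:ℝ) + t • (1 + 1/(lam*σ^2)) = 1 + (z i)^2/σ^2 := by
      simp only [smul_eq_mul, ht]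
      field_simp
      ring
    rw [heq] at hconc
    have := hconc
    simp only [smul_eq_mul, Real.log_one, mul_zero, zero_add] at this
    calc lam * L * (z i)^2 = t * L := by rw [ht]; ring
      _ ≤ _ := this
  have hsum2 : ∑ i, (z i)^2 ≤ B / (lam * L) := by
    have h1 : lam * L * ∑ i, (z i)^2 ≤ B := by
      rw [Finset.mul_sum]
      exact le_trans (Finset.sum_le_sum fun i _ => key i) hlog
    rw [le_div_iff₀ (by positivity)]
    linarith [h1]
  have hcs : (∑ i, z i)^2 ≤ (N:ℝ) * ∑ i, (z i)^2 := by
    have := sq_sum_le_card_mul_sum_sq (s := Finset.univ) (f := z)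
    simpa using this
  have hnn : 0 ≤ ∑ i, z i := Finset.sum_nonneg fun i _ => hz i
  have : (∑ i, z i)^2 ≤ (N:ℝ) * (B / (lam * L)) := by
    calc (∑ i, z i)^2 ≤ (N:ℝ) * ∑ i, (z i)^2 := hcs
      _ ≤ _ := by
        exact mul_le_mul_of_nonneg_left hsum2 (Nat.cast_nonneg N)
  calc ∑ i, z i = Real.sqrt ((∑ i, z i)^2) := (Real.sqrt_sq hnn).symm
    _ ≤ Real.sqrt ((N:ℝ) * (B / (lam * L))) := Real.sqrt_le_sqrt this
    _ = Real.sqrt N * Real.sqrt (B / (lam * L)) := Real.sqrt_mul (Nat.cast_nonneg N) _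
end
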